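/- Let N be a normal subgroup of a finite group G such that G/N is abelian, and let π be an irreducible finite-dimensional complex representation of G. Then every irreducible representation of N that appears in the restriction Res_N π does so with the same multiplicity; that is, for any two irreducible finite-dimensional complex representations ρ and ρ' of N with Hom_N(ρ, Res_N π) ≠ 0 and Hom_N(ρ', Res_N π) ≠ 0, one has dim Hom_N(ρ, Res_N π) = dim Hom_N(ρ', Res_N π). -/

import Mathlib

noncomputable section

namespace RestrictionMult

variable {G : Type*} [Group G]

/-- The submodule of equivariant linear maps between two representations. -/
def equivariantHoms {V W : Type*} [AddCommGroup V] [Module ℂ V]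
    [AddCommGroup W] [Module ℂ W]
    (π : Representation ℂ G V) (σ : Representation ℂ G W) :
    Submodule ℂ (V →ₗ[ℂ] W) where
  carrier := {f | ∀ g v, f (π g v) = σ g (f v)}
  add_mem' := by intro f₁ f₂ h₁ h₂ g v; simp [h₁ g v, h₂ g v]
  zero_mem' := by intro g v; simp
  smul_mem' := by intro c f hf g v; simp [hf g v]

/-- Two representations are equivalent (isomorphic). -/
def IsRepEquiv {V W : Type*} [AddCommGroup V] [Module ℂ V]
    [AddCommGroup W] [Module ℂ W]
    (π : Representation ℂ G V) (σ : Representation ℂ G W) : Prop :=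
  ∃ e : V ≃ₗ[ℂ] W, ∀ g v, e (π g v) = σ g (e v)

/-- A representation is irreducible if the space is nonzero and the only invariant
submodules are `⊥` and `⊤`. -/
def IsIrreducibleRep {V : Type*} [AddCommGroup V] [Module ℂ V]
    (π : Representation ℂ G V) : Prop :=
  (∃ v : V, v ≠ 0) ∧
    ∀ U : Submodule ℂ V, (∀ g, ∀ v ∈ U, π g v ∈ U) → U = ⊥ ∨ U = ⊤

/-- The twist of a representation by a character `χ : G →* ℂˣ`. -/
def twist {V : Type*} [AddCommGroup V] [Module ℂ V]
    (π : Representation ℂ G V) (χ : G →* ℂˣ) : Representation ℂ G V where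
  toFun g := (χ g : ℂ) • π g
  map_one' := by simp
  map_mul' g h := by
    ext v
    simp only [Module.End.mul_apply, LinearMap.smul_apply, map_smul, map_mul, Units.val_mul,
      mul_smul]
    rw [smul_comm]

/-- The direct sum of two representations. -/
def dsum {V W : Type*} [AddCommGroup V] [Module ℂ V]
    [AddCommGroup W] [Module ℂ W]
    (π : Representation ℂ G V) (σ : Representation ℂ G W) :
    Representation ℂ G (V × W) where
  toFun g := (π g).prodMap (σ g)
  map_one' := by ext v <;> simp
  map_mul' g h := by ext v <;> simp [Module.End.mul_apply]

/-- The subrepresentation on an invariant submodule. -/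
def resSub {V : Type*} [AddCommGroup V] [Module ℂ V]
    (π : Representation ℂ G V) (U : Submodule ℂ V)
    (hU : ∀ g, ∀ v ∈ U, π g v ∈ U) : Representation ℂ G U where
  toFun g := (π g).restrict (fun v hv => hU g v hv)
  map_one' := by ext v; simp [LinearMap.restrict_apply]
  map_mul' g h := by ext v; simp [LinearMap.restrict_apply, Module.End.mul_apply]

/-- The conjugate `π^g` of a representation of a normal subgroup `N`,
given by `x ↦ π (g⁻¹ x g)`. -/
def conjRep {N : Subgroup G} [N.Normal] {V : Type*} [AddCommGroup V] [Module ℂ V]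
    (π : Representation ℂ N V) (g : G) : Representation ℂ N V :=
  π.comp (MulAut.conjNormal g⁻¹ : N ≃* N).toMonoidHom

/-- The space of the representation of `G` induced from a representation of a
subgroup `N`: functions `f : G → V` with `f (n * x) = π n (f x)`. -/
def indSubmodule (N : Subgroup G) {V : Type*} [AddCommGroup V] [Module ℂ V]
    (π : Representation ℂ N V) : Submodule ℂ (G → V) where
  carrier := {f | ∀ (n : N) (x : G), f (n * x) = π n (f x)}
  add_mem' := by intro f₁ f₂ h₁ h₂ n x; simp [h₁ n x, h₂ n x]
  zero_mem' := by intro n x; simp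
  smul_mem' := by intro c f hf n x; simp [hf n x]

/-- The representation of `G` induced from a representation `π` of a subgroup `N`,
acting by right translation on `indSubmodule N π`. -/
def ind (N : Subgroup G) {V : Type*} [AddCommGroup V] [Module ℂ V]
    (π : Representation ℂ N V) : Representation ℂ G (indSubmodule N π) where
  toFun g :=
    { toFun := fun f => ⟨fun x => (f : G → V) (x * g),
        fun n x => by simpa [mul_assoc] using f.2 n (x * g)⟩
      map_add' := fun f₁ f₂ => by ext x; rfl
      map_smul' := fun c f => by ext x; rfl }
  map_one' := by ext f x; simp
  map_mul' g h := by ext f x; simp [Module.End.mul_apply, mul_assoc]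

/-!
Clifford's argument. Averaging a linear left inverse of a nonzero `N`-map `ρ' → Res_N π` over `N`
gives an `N`-equivariant projection `p : V → W'`. As `π` is irreducible, `p` cannot kill every
`G`-translate of the image of a nonzero `N`-map `f : ρ → Res_N π`, so `p ∘ π g ∘ f` is a nonzero
`N`-map from the conjugate `ρ^g` to `ρ'` for some `g`, an isomorphism by Schur's lemma. Finally
`h ↦ π g ∘ h` identifies `Hom_N(ρ, Res_N π)` with `Hom_N(ρ^g, Res_N π)`.
-/

section
variable {V W : Type*} [AddCommGroup V] [Module ℂ V] [AddCommGroup W] [Module ℂ W]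
  {π : Representation ℂ G V} {σ : Representation ℂ G W}

theorem comp_mem_equivariantHoms {U : Type*} [AddCommGroup U] [Module ℂ U]
    {υ : Representation ℂ G U} {f : V →ₗ[ℂ] W} {h : W →ₗ[ℂ] U}
    (hh : h ∈ equivariantHoms σ υ) (hf : f ∈ equivariantHoms π σ) :
    h ∘ₗ f ∈ equivariantHoms π υ := fun g v => by
  simp only [LinearMap.comp_apply, hf g v, hh g (f v)]

theorem IsIrreducibleRep.injective_of_mem_equivariantHoms (hπ : IsIrreducibleRep π)
    {f : V →ₗ[ℂ] W} (hf : f ∈ equivariantHoms π σ) (hf0 : f ≠ 0) : Function.Injective f := by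
  refine LinearMap.ker_eq_bot.mp ((hπ.2 _ fun g v hv => ?_).resolve_right fun h => hf0 ?_)
  · rw [LinearMap.mem_ker] at hv ⊢
    rw [hf g v, hv, map_zero]
  · exact LinearMap.ker_eq_top.mp h

theorem IsIrreducibleRep.surjective_of_mem_equivariantHoms (hσ : IsIrreducibleRep σ)
    {f : V →ₗ[ℂ] W} (hf : f ∈ equivariantHoms π σ) (hf0 : f ≠ 0) : Function.Surjective f := by
  refine LinearMap.range_eq_top.mp ((hσ.2 _ fun g w hw => ?_).resolve_left fun h => hf0 ?_)
  · obtain ⟨v, rfl⟩ := hw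
    exact ⟨π g v, hf g v⟩
  · exact LinearMap.range_eq_bot.mp h

theorem isRepEquiv_of_mem_equivariantHoms (hπ : IsIrreducibleRep π) (hσ : IsIrreducibleRep σ)
    {f : V →ₗ[ℂ] W} (hf : f ∈ equivariantHoms π σ) (hf0 : f ≠ 0) : IsRepEquiv π σ :=
  ⟨.ofBijective f ⟨hπ.injective_of_mem_equivariantHoms hf hf0,
    hσ.surjective_of_mem_equivariantHoms hf hf0⟩, hf⟩

theorem IsIrreducibleRep.comp_of_surjective {H : Type*} [Group H] (hπ : IsIrreducibleRep π)
    (φ : H →* G) (hφ : Function.Surjective φ) : IsIrreducibleRep (π.comp φ) := by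
  refine ⟨hπ.1, fun U hU => hπ.2 U fun g v hv => ?_⟩
  obtain ⟨h, rfl⟩ := hφ g
  exact hU h v hv

theorem IsIrreducibleRep.exists_apply_ne_zero (hπ : IsIrreducibleRep π) {p : V →ₗ[ℂ] W}
    (hp : p ≠ 0) {v : V} (hv : v ≠ 0) : ∃ g, p (π g v) ≠ 0 := by
  by_contra! hvU
  let U : Submodule ℂ V := ⨅ g, LinearMap.ker (p ∘ₗ π g)
  have hmem : ∀ x, x ∈ U ↔ ∀ g, p (π g x) = 0 := by simp [U, Submodule.mem_iInf]
  have hUinv : ∀ h, ∀ x ∈ U, π h x ∈ U := fun h x hx => (hmem _).mpr fun g => by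
    simpa [← Module.End.mul_apply, ← map_mul] using (hmem x).mp hx (g * h)
  have hUtop : U = ⊤ := (hπ.2 U hUinv).resolve_left fun hbot =>
    hv (by simpa [hbot] using (hmem v).mpr hvU)
  exact hp (LinearMap.ext fun x => by simpa using (hmem x).mp (hUtop ▸ Submodule.mem_top) 1)

theorem finrank_eq_of_linearEquiv_mapsTo {R M M' : Type*} [Ring R] [AddCommGroup M] [Module R M]
    [AddCommGroup M'] [Module R M'] (E : M ≃ₗ[R] M') {A : Submodule R M} {B : Submodule R M'}
    (hAB : ∀ x ∈ A, E x ∈ B) (hBA : ∀ y ∈ B, E.symm y ∈ A) :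
    Module.finrank R A = Module.finrank R B :=
  (E.ofSubmodules A B (le_antisymm (Submodule.map_le_iff_le_comap.mpr hAB)
    fun y hy => ⟨E.symm y, hBA y hy, E.apply_symm_apply y⟩)).finrank_eq

theorem finrank_equivariantHoms_eq_of_isRepEquiv {W' : Type*} [AddCommGroup W'] [Module ℂ W']
    {σ' : Representation ℂ G W'} (e : IsRepEquiv σ σ') (π : Representation ℂ G V) :
    Module.finrank ℂ (equivariantHoms σ π) = Module.finrank ℂ (equivariantHoms σ' π) := by
  obtain ⟨e, he⟩ := e
  have he' : ∀ g w, e.symm (σ' g w) = σ g (e.symm w) := fun g w => by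
    rw [e.symm_apply_eq, he, e.apply_symm_apply]
  refine finrank_eq_of_linearEquiv_mapsTo (e.arrowCongr (.refl ℂ V)) (fun h hh g w => ?_)
    fun h hh g w => ?_
  · simp [he', hh g]
  · simp [he, hh g]

open Representation in
theorem exists_retraction_mem_equivariantHoms [Fintype G] {f : W →ₗ[ℂ] V}
    (hf : f ∈ equivariantHoms σ π) (hinj : Function.Injective f) :
    ∃ p ∈ equivariantHoms π σ, p ∘ₗ f = LinearMap.id := by
  obtain ⟨q, hq⟩ := f.exists_leftInverse_of_injective (LinearMap.ker_eq_bot.mpr hinj)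
  have : Invertible (Fintype.card G : ℂ) :=
    invertibleOfNonzero (Nat.cast_ne_zero.mpr Fintype.card_ne_zero)
  refine ⟨(linHom π σ).averageMap q, ((mem_linHom_invariants_iff_isIntertwining _).mp
    ((linHom π σ).averageMap_invariant q)).isIntertwining, LinearMap.ext fun w => ?_⟩
  have hqf : ∀ g : G, q (f (σ g⁻¹ w)) = σ g⁻¹ w := fun g => congr($hq _)
  have hf' : ∀ g w, f (σ g w) = π g (f w) := hf
  simp [GroupAlgebra.average, map_sum, linHom_apply, ← hf', hqf, ← Nat.cast_smul_eq_nsmul ℂ,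
    smul_smul]

end

section
variable {N : Subgroup G} [N.Normal] {V W : Type*} [AddCommGroup V] [Module ℂ V]
  [AddCommGroup W] [Module ℂ W]

theorem conjRep_conjRep_inv (ρ : Representation ℂ N W) (g : G) :
    conjRep (conjRep ρ g) g⁻¹ = ρ :=
  MonoidHom.ext fun n => congrArg ρ (Subtype.ext (by simp))

theorem comp_mem_equivariantHoms_conjRep (π : Representation ℂ G V) {ρ : Representation ℂ N W}
    {f : W →ₗ[ℂ] V} (hf : f ∈ equivariantHoms ρ (π.comp N.subtype)) (g : G) :
    π g ∘ₗ f ∈ equivariantHoms (conjRep ρ g) (π.comp N.subtype) := fun n w => by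
  simp [conjRep, hf _ w, ← Module.End.mul_apply, ← map_mul, mul_assoc]

theorem finrank_equivariantHoms_conjRep (π : Representation ℂ G V) (ρ : Representation ℂ N W)
    (g : G) :
    Module.finrank ℂ (equivariantHoms ρ (π.comp N.subtype)) =
      Module.finrank ℂ (equivariantHoms (conjRep ρ g) (π.comp N.subtype)) := by
  refine finrank_eq_of_linearEquiv_mapsTo
    (LinearEquiv.congrRight
      { π g with invFun := π g⁻¹, left_inv := π.inv_self_apply g,
                 right_inv := π.self_inv_apply g })
    (fun h hh => comp_mem_equivariantHoms_conjRep π hh g)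
    fun h hh => conjRep_conjRep_inv ρ g ▸ comp_mem_equivariantHoms_conjRep π hh g⁻¹

theorem IsIrreducibleRep.conjRep {ρ : Representation ℂ N W} (hρ : IsIrreducibleRep ρ) (g : G) :
    IsIrreducibleRep (conjRep ρ g) :=
  hρ.comp_of_surjective _ (MulEquiv.surjective _)

theorem exists_isRepEquiv_conjRep [Finite G] {W' : Type*} [AddCommGroup W'] [Module ℂ W']
    {π : Representation ℂ G V} (hπ : IsIrreducibleRep π)
    {ρ : Representation ℂ N W} (hρ : IsIrreducibleRep ρ)
    {ρ' : Representation ℂ N W'} (hρ' : IsIrreducibleRep ρ')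
    (h₁ : equivariantHoms ρ (π.comp N.subtype) ≠ ⊥)
    (h₂ : equivariantHoms ρ' (π.comp N.subtype) ≠ ⊥) :
    ∃ g, IsRepEquiv (conjRep ρ g) ρ' := by
  have : Fintype N := Fintype.ofFinite N
  obtain ⟨f, hf, hf0⟩ := (Submodule.ne_bot_iff _).mp h₁
  obtain ⟨f', hf', hf'0⟩ := (Submodule.ne_bot_iff _).mp h₂
  obtain ⟨p, hp, hpf'⟩ := exists_retraction_mem_equivariantHoms hf'
    (hρ'.injective_of_mem_equivariantHoms hf' hf'0)
  have hp0 : p ≠ 0 := by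
    obtain ⟨w', hw'⟩ := hρ'.1
    rintro rfl
    exact hw' (by simpa using congr($hpf' w').symm)
  obtain ⟨w, hw⟩ : ∃ w, f w ≠ 0 := by simpa [LinearMap.ext_iff] using hf0
  obtain ⟨g, hg⟩ := hπ.exists_apply_ne_zero hp0 hw
  exact ⟨g, isRepEquiv_of_mem_equivariantHoms (hρ.conjRep g) hρ'
    (comp_mem_equivariantHoms hp (comp_mem_equivariantHoms_conjRep π hf g))
    fun h => hg (by simpa using congr($h w))⟩

end

theorem multiplicity_in_restriction_constant_general
    {G : Type*} [Group G] [Finite G] (N : Subgroup G) [N.Normal]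
    {V W W' : Type*}
    [AddCommGroup V] [Module ℂ V]
    [AddCommGroup W] [Module ℂ W]
    [AddCommGroup W'] [Module ℂ W']
    (π : Representation ℂ G V) (hπ : IsIrreducibleRep π)
    (ρ : Representation ℂ N W) (hρ : IsIrreducibleRep ρ)
    (ρ' : Representation ℂ N W') (hρ' : IsIrreducibleRep ρ')
    (h₁ : equivariantHoms ρ (π.comp N.subtype) ≠ ⊥)
    (h₂ : equivariantHoms ρ' (π.comp N.subtype) ≠ ⊥) :
    Module.finrank ℂ (equivariantHoms ρ (π.comp N.subtype)) =
      Module.finrank ℂ (equivariantHoms ρ' (π.comp N.subtype)) := by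
  obtain ⟨g, e⟩ := exists_isRepEquiv_conjRep hπ hρ hρ' h₁ h₂
  rw [finrank_equivariantHoms_conjRep π ρ g]
  exact finrank_equivariantHoms_eq_of_isRepEquiv e _

/-- If `N` is a normal subgroup of a finite group `G` with abelian
quotient and `π` is an irreducible complex representation of `G`, then every irreducible
representation of `N` occurring in `Res_N π` does so with the same multiplicity. -/
theorem multiplicity_in_restriction_constant
    {G : Type*} [Group G] [Finite G] (N : Subgroup G) [N.Normal]
    (hab : ∀ a b : G ⧸ N, a * b = b * a)
    {V W W' : Type*}
    [AddCommGroup V] [Module ℂ V] [FiniteDimensional ℂ V]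
    [AddCommGroup W] [Module ℂ W] [FiniteDimensional ℂ W]
    [AddCommGroup W'] [Module ℂ W'] [FiniteDimensional ℂ W']
    (π : Representation ℂ G V) (hπ : IsIrreducibleRep π)
    (ρ : Representation ℂ N W) (hρ : IsIrreducibleRep ρ)
    (ρ' : Representation ℂ N W') (hρ' : IsIrreducibleRep ρ')
    (h₁ : equivariantHoms ρ (π.comp N.subtype) ≠ ⊥)
    (h₂ : equivariantHoms ρ' (π.comp N.subtype) ≠ ⊥) :
    Module.finrank ℂ (equivariantHoms ρ (π.comp N.subtype)) =
      Module.finrank ℂ (equivariantHoms ρ' (π.comp N.subtype)) :=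
  multiplicity_in_restriction_constant_general N π hπ ρ hρ ρ' hρ' h₁ h₂

end RestrictionMult
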